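/- For every n ≥ 0, the number of Dyck n-paths whose terminal descent has even length equals the number of hill-free Dyck n-paths (paths with no UD occurrence starting at ground level). -/

import Mathlib

inductive Step : Type
  | U : Step
  | D : Step
deriving DecidableEq

open Step

/-- The path stays weakly above ground level: every prefix has at least as many `U`s as `D`s. -/
def NonnegPrefixes (p : List Step) : Prop :=
  ∀ q : List Step, q <+: p → q.count D ≤ q.count U

/-- A Dyck path: equally many upsteps and downsteps, never dipping below ground level. -/
def IsDyck (p : List Step) : Prop :=
  p.count U = p.count D ∧ NonnegPrefixes p

/-- A Dyck `n`-path: a Dyck path with `n` upsteps (semilength `n`). -/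
def IsDyckN (n : ℕ) (p : List Step) : Prop :=
  IsDyck p ∧ p.count U = n

/-- Length of the terminal descent (maximal final run of downsteps). -/
def termDesc (p : List Step) : ℕ :=
  (p.reverse.takeWhile (fun s => s == D)).length

/-- Number of returns: downsteps that bring the path back to ground level. -/
def returnCount (p : List Step) : ℕ :=
  ((List.range p.length).filter
    (fun i => (p.take (i+1)).count U == (p.take (i+1)).count D)).length

/-- `GroundDescent p q m r` : `p = q ++ D^m ++ r` is a maximal run of `m ≥ 1` downsteps
ending at ground level. -/
def GroundDescent (p q : List Step) (m : ℕ) (r : List Step) : Prop :=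
  p = q ++ List.replicate m D ++ r ∧ 1 ≤ m ∧
  q.getLast? ≠ some D ∧ r.head? ≠ some D ∧
  q.count U = q.count D + m

/-- All descents to ground level other than the terminal one have odd length. -/
def OddNonterminalGroundDescents (p : List Step) : Prop :=
  ∀ q m r, GroundDescent p q m r → r ≠ [] → Odd m

/-- No occurrence of `UD` starting at ground level. -/
def HillFree (p : List Step) : Prop :=
  ∀ q r : List Step, p = q ++ [U, D] ++ r → q.count U ≠ q.count D

/-- No occurrence of `UDU` starting at ground level. -/
def EarlyHillFree (p : List Step) : Prop :=
  ∀ q r : List Step, p = q ++ [U, D, U] ++ r → q.count U ≠ q.count D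

/-- Number of early hills: occurrences of `UDU` starting at ground level. -/
def earlyHillCount (p : List Step) : ℕ :=
  ((List.range p.length).filter
    (fun i => decide ((p.take i).count U = (p.take i).count D ∧
      (p.drop i).take 3 = [U, D, U]))).length

/-!
Cut a nonempty Dyck path at its first return to ground level: `p = U t D s` with `t`, `s` Dyck.
The terminal descent of `p` is that of `s`, unless `s` is empty, when it is one longer than that
of `t`; and `p` is hill-free iff `t` is nonempty and `s` is hill-free. Let `C n`, `E n`, `H n`
count all, even-terminal-descent and hill-free Dyck `n`-paths. Summing over the semilength `k`
of `t`, `E (n+1)` misses from `∑ₖ C k * E (n-k)` exactly the paths `U t D` with `termDesc t`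
even, `E n` of them, and `H (n+1)` misses the summand `k = 0`, which is `H n`. So both sequences
satisfy `f (n+1) + f n = ∑ₖ C k * f (n-k)` with `f 0 = 1`, and they agree.
-/

instance : Fintype Step := ⟨{U, D}, fun s => by cases s <;> simp⟩

lemma List.prefix_or_eq_append_of_prefix_append {α : Type*} {l a b : List α} (h : l <+: a ++ b) :
    l <+: a ∨ ∃ r, r <+: b ∧ l = a ++ r := by
  rcases le_or_gt l.length a.length with hl | hl
  · exact Or.inl (List.prefix_of_prefix_length_le h (a.prefix_append b) hl)
  · obtain ⟨r, rfl⟩ := List.prefix_of_prefix_length_le (a.prefix_append b) h hl.le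
    exact Or.inr ⟨r, (List.prefix_append_right_inj a).mp h, rfl⟩

lemma Nat.card_and_add_card_and_not {α : Type*} (p q : α → Prop) [Finite {x // p x}] :
    Nat.card {x // p x ∧ q x} + Nat.card {x // p x ∧ ¬ q x} = Nat.card {x // p x} := by
  classical
  rw [← Nat.card_congr (Equiv.subtypeSubtypeEquivSubtypeInter p q),
    ← Nat.card_congr (Equiv.subtypeSubtypeEquivSubtypeInter p (¬ q ·)), ← Nat.card_sum]
  exact Nat.card_congr (Equiv.sumCompl _)

lemma length_eq_count_U_add_count_D (p : List Step) : p.length = p.count U + p.count D := by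
  induction p with
  | nil => rfl
  | cons a p ih => cases a <;> simp [ih] <;> omega

lemma not_nonnegPrefixes_append_D {t : List Step} (ht : t.count U = t.count D) (u : List Step) :
    ¬ NonnegPrefixes (t ++ D :: u) := fun h => by
  have := h (t ++ [D]) ⟨u, by simp⟩
  simp only [List.count_append, List.count_cons, List.count_nil, beq_iff_eq, reduceCtorEq,
    ↓reduceIte] at this
  omega

lemma NonnegPrefixes.append {a b : List Step} (ha : IsDyck a) (hb : NonnegPrefixes b) :
    NonnegPrefixes (a ++ b) := by
  intro q hq
  rcases List.prefix_or_eq_append_of_prefix_append hq with hq | ⟨r, hr, rfl⟩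
  · exact ha.2 q hq
  · have := hb r hr
    have := ha.1
    simp only [List.count_append]
    omega

lemma IsDyck.nil : IsDyck [] :=
  ⟨rfl, fun q hq => by simp [List.prefix_nil.mp hq]⟩

lemma IsDyck.wrap {t : List Step} (ht : IsDyck t) : IsDyck (U :: (t ++ [D])) := by
  refine ⟨by simp [List.count_append, ht.1], fun q hq => ?_⟩
  rcases List.prefix_cons_iff.mp hq with rfl | ⟨r, rfl, hr⟩
  · simp
  rcases List.prefix_concat_iff.mp hr with rfl | hr
  · simp [List.count_append, ht.1]
  · have := ht.2 r hr
    simp only [List.count_cons, beq_iff_eq, reduceCtorEq, ↓reduceIte]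
    omega

lemma IsDyck.append {a b : List Step} (ha : IsDyck a) (hb : IsDyck b) : IsDyck (a ++ b) :=
  ⟨by simp [List.count_append, ha.1, hb.1], hb.2.append ha⟩

lemma exists_isDyck_append_D_of_prefix_count_lt (l : List Step)
    (h : ∃ q, q <+: l ∧ q.count U < q.count D) : ∃ t s, IsDyck t ∧ l = t ++ D :: s := by
  induction l using List.reverseRecOn with
  | nil =>
    obtain ⟨q, hq, hlt⟩ := h
    simp [List.prefix_nil.mp hq] at hlt
  | append_singleton l a ih =>
    by_cases hl : ∃ q, q <+: l ∧ q.count U < q.count D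
    · obtain ⟨t, s, ht, rfl⟩ := ih hl
      exact ⟨t, s ++ [a], ht, by simp⟩
    · -- `l` never dips below ground, so the dip happens at the final step.
      push Not at hl
      obtain ⟨q, hq, hlt⟩ := h
      rcases List.prefix_concat_iff.mp hq with rfl | hq
      · have hl' := hl l (List.prefix_refl l)
        cases a <;> simp only [List.count_append, List.count_cons, List.count_nil, beq_iff_eq,
          reduceCtorEq, ↓reduceIte] at hlt
        · omega
        · exact ⟨l, [], ⟨by omega, hl⟩, rfl⟩
      · exact absurd (hl q hq) (not_le.mpr hlt)

lemma IsDyck.exists_eq_arch {p : List Step} (hp : IsDyck p) (hne : p ≠ []) :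
    ∃ t s, IsDyck t ∧ IsDyck s ∧ p = U :: (t ++ D :: s) := by
  obtain ⟨a, q, rfl⟩ := List.exists_cons_of_ne_nil hne
  cases a
  case D => exact absurd hp.2 (not_nonnegPrefixes_append_D (t := []) rfl q)
  case U =>
    have hq : q.count U < q.count D := by
      have := hp.1
      simp only [List.count_cons, beq_iff_eq, reduceCtorEq, ↓reduceIte] at this
      omega
    obtain ⟨t, s, ht, rfl⟩ :=
      exists_isDyck_append_D_of_prefix_count_lt q ⟨q, List.prefix_refl q, hq⟩
    refine ⟨t, s, ht, ⟨?_, fun r hr => ?_⟩, rfl⟩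
    · have := hp.1
      simp only [List.count_append, List.count_cons, beq_iff_eq, reduceCtorEq, ↓reduceIte,
        ht.1] at this
      omega
    · have := hp.2 (U :: (t ++ D :: r)) (by simpa using hr)
      simp only [List.count_append, List.count_cons, beq_iff_eq, reduceCtorEq, ↓reduceIte,
        ht.1] at this
      omega

lemma IsDyck.eq_of_append_D_eq {t t' s s' : List Step} (ht : IsDyck t) (ht' : IsDyck t')
    (h : t ++ D :: s = t' ++ D :: s') : t = t' := by
  rcases List.append_eq_append_iff.mp h with
    ⟨_ | ⟨a, u⟩, rfl, hu⟩ | ⟨_ | ⟨a, u⟩, rfl, hu⟩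
  · simp
  · obtain ⟨rfl, -⟩ := List.cons_eq_cons.mp hu
    exact absurd ht'.2 (not_nonnegPrefixes_append_D ht.1 u)
  · simp
  · obtain ⟨rfl, -⟩ := List.cons_eq_cons.mp hu
    exact absurd ht.2 (not_nonnegPrefixes_append_D ht'.1 u)

lemma IsDyckN.arch {k m : ℕ} {t s : List Step} (ht : IsDyckN k t) (hs : IsDyckN m s) :
    IsDyckN (k + m + 1) (U :: (t ++ D :: s)) := by
  have h := ht.1.wrap.append hs.1
  simp only [List.cons_append, List.append_assoc] at h
  refine ⟨h, ?_⟩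
  simp [List.count_append, ht.2, hs.2]

lemma IsDyckN.eq_nil_iff {n : ℕ} {p : List Step} (hp : IsDyckN n p) : p = [] ↔ n = 0 := by
  refine ⟨fun h => by simpa [h] using hp.2.symm, fun h => ?_⟩
  have := length_eq_count_U_add_count_D p
  have := hp.1.1
  have := hp.2
  exact List.length_eq_zero_iff.mp (by omega)

lemma isDyckN_zero_iff {p : List Step} : IsDyckN 0 p ↔ p = [] :=
  ⟨fun hp => hp.eq_nil_iff.mpr rfl, fun h => h ▸ ⟨IsDyck.nil, rfl⟩⟩

lemma finite_setOf_isDyckN (n : ℕ) : {p | IsDyckN n p}.Finite := by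
  refine (List.finite_length_eq Step (2 * n)).subset fun p hp => ?_
  have := length_eq_count_U_add_count_D p
  have := hp.1.1
  have := hp.2
  exact (by omega : p.length = 2 * n)

instance (n : ℕ) : Finite {p // IsDyckN n p} := (finite_setOf_isDyckN n).to_subtype

instance (n : ℕ) (P : List Step → Prop) : Finite {p // IsDyckN n p ∧ P p} :=
  ((finite_setOf_isDyckN n).subset fun _ hp => hp.1).to_subtype

lemma card_isDyckN_zero : Nat.card {p // IsDyckN 0 p} = 1 := by
  simp [isDyckN_zero_iff]

lemma card_isDyckN_zero_and {P : List Step → Prop} (h : P []) :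
    Nat.card {p // IsDyckN 0 p ∧ P p} = 1 :=
  Nat.card_eq_one_iff_exists.mpr ⟨⟨[], isDyckN_zero_iff.mpr rfl, h⟩,
    fun p => Subtype.ext (isDyckN_zero_iff.mp p.2.1)⟩

@[simp]
lemma termDesc_nil : termDesc [] = 0 := rfl

lemma termDesc_cons_U (p : List Step) : termDesc (U :: p) = termDesc p := by
  simp only [termDesc, List.reverse_cons, List.takeWhile_append]
  split_ifs with h <;> simp [h]

lemma termDesc_append_D (p : List Step) : termDesc (p ++ [D]) = termDesc p + 1 := by
  simp [termDesc]

lemma termDesc_append_of_U_mem (q : List Step) {s : List Step} (hs : U ∈ s) :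
    termDesc (q ++ s) = termDesc s := by
  simp only [termDesc, List.reverse_append, List.takeWhile_append]
  rw [if_neg]
  intro h
  have := List.takeWhile_eq_self_iff.mp (List.IsPrefix.eq_of_length (List.takeWhile_prefix _) h)
  simpa using this U (List.mem_reverse.mpr hs)

lemma even_termDesc_arch_iff (t : List Step) {s : List Step} (hs : IsDyck s) :
    Even (termDesc (U :: (t ++ D :: s))) ↔
      (s = [] → ¬ Even (termDesc t)) ∧ Even (termDesc s) := by
  rcases eq_or_ne s [] with rfl | hne
  · simp [termDesc_cons_U, termDesc_append_D, Nat.even_add_one]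
  · have hU : U ∈ s := by
      obtain ⟨_, _, -, -, rfl⟩ := hs.exists_eq_arch hne
      exact List.mem_cons_self
    rw [show U :: (t ++ D :: s) = U :: (t ++ [D]) ++ s by simp, termDesc_append_of_U_mem _ hU]
    simp [hne]

lemma hillFree_nil : HillFree [] := fun q r h => by simp at h

lemma hillFree_arch_iff {t s : List Step} (ht : IsDyck t) :
    HillFree (U :: (t ++ D :: s)) ↔ t ≠ [] ∧ HillFree s := by
  constructor
  · intro h
    refine ⟨by rintro rfl; exact h [] s rfl rfl,
      fun q r hs hq => h (U :: (t ++ D :: q)) r ?_ ?_⟩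
    · simp [hs]
    · simp only [List.count_append, List.count_cons, beq_iff_eq, reduceCtorEq, ↓reduceIte, ht.1,
        hq]
      omega
  · rintro ⟨hne, hs⟩ (_ | ⟨a, q⟩) r h hq
    · obtain ⟨b, t', rfl⟩ := List.exists_cons_of_ne_nil hne
      obtain ⟨rfl, -⟩ : b = D ∧ _ := by simpa using h
      exact not_nonnegPrefixes_append_D (t := []) rfl t' ht.2
    · obtain ⟨rfl, hts⟩ : U = a ∧ t ++ D :: s = q ++ U :: D :: r := by simpa using h
      rcases List.append_eq_append_iff.mp hts with ⟨_ | ⟨b, u⟩, rfl, hu⟩ | ⟨u, rfl, -⟩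
      · simp at hu
      · obtain ⟨rfl, rfl⟩ : D = b ∧ s = u ++ U :: D :: r := by simpa using hu
        refine hs u r (by simp) ?_
        simp only [List.count_append, List.count_cons, beq_iff_eq, reduceCtorEq, ↓reduceIte,
          ht.1] at hq
        omega
      · have := ht.2 q (List.prefix_append q u)
        simp only [List.count_cons, beq_iff_eq, reduceCtorEq, ↓reduceIte] at hq
        omega

lemma card_isDyckN_succ_and (n : ℕ) (P : List Step → Prop) (R Q : ℕ → List Step → Prop)
    (hP : ∀ k ≤ n, ∀ t s, IsDyckN k t → IsDyckN (n - k) s →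
      (P (U :: (t ++ D :: s)) ↔ R k t ∧ Q k s)) :
    Nat.card {p // IsDyckN (n + 1) p ∧ P p} =
      ∑ k : Fin (n + 1), Nat.card {t // IsDyckN k t ∧ R k t} *
        Nat.card {s // IsDyckN (n - k) s ∧ Q k s} := by
  let arch
      (x : Σ k : Fin (n + 1), {t // IsDyckN k t ∧ R k t} × {s // IsDyckN (n - k) s ∧ Q k s}) :
      {p // IsDyckN (n + 1) p ∧ P p} :=
    ⟨U :: (x.2.1.1 ++ D :: x.2.2.1), by
      obtain ⟨k, ⟨t, ht, hR⟩, ⟨s, hs, hQ⟩⟩ := x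
      have hk := Nat.lt_succ_iff.mp k.2
      exact ⟨by simpa [hk] using ht.arch hs, (hP k hk t s ht hs).mpr ⟨hR, hQ⟩⟩⟩
  have arch_injective : Function.Injective arch := by
    rintro ⟨k, ⟨t, ht, _⟩, ⟨s, _⟩⟩ ⟨k', ⟨t', ht', _⟩, ⟨s', _⟩⟩ h
    have hts : t ++ D :: s = t' ++ D :: s' := by simpa [arch] using congrArg Subtype.val h
    obtain rfl := ht.1.eq_of_append_D_eq ht'.1 hts
    obtain rfl : s = s' := by simpa using hts
    obtain rfl : k = k' := Fin.ext (ht.2.symm.trans ht'.2)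
    rfl
  have arch_surjective : Function.Surjective arch := by
    rintro ⟨p, hp, hPp⟩
    obtain ⟨t, s, ht, hs, rfl⟩ := hp.1.exists_eq_arch (hp.eq_nil_iff.not.mpr n.succ_ne_zero)
    have hcount : t.count U + s.count U = n := by simpa [List.count_append] using hp.2
    have htN : IsDyckN (t.count U) t := ⟨ht, rfl⟩
    have hsN : IsDyckN (n - t.count U) s := ⟨hs, by omega⟩
    obtain ⟨hR, hQ⟩ := (hP _ (by omega) t s htN hsN).mp hPp
    exact ⟨⟨⟨t.count U, by omega⟩, ⟨t, htN, hR⟩, ⟨s, hsN, hQ⟩⟩, rfl⟩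
  rw [← Nat.card_congr (Equiv.ofBijective arch ⟨arch_injective, arch_surjective⟩),
    Nat.card_sigma]
  simp only [Nat.card_prod]

lemma card_even_termDesc_succ_add (n : ℕ) :
    Nat.card {p // IsDyckN (n + 1) p ∧ Even (termDesc p)} +
        Nat.card {p // IsDyckN n p ∧ Even (termDesc p)} =
      ∑ k : Fin (n + 1), Nat.card {t // IsDyckN k t} *
        Nat.card {s // IsDyckN (n - k) s ∧ Even (termDesc s)} := by
  rw [card_isDyckN_succ_and n _ (fun k t => k = n → ¬ Even (termDesc t))
    (fun _ s => Even (termDesc s)) fun k hk t s _ hs => by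
      rw [even_termDesc_arch_iff t hs.1, hs.eq_nil_iff, show n - k = 0 ↔ k = n by omega]]
  rw [Fin.sum_univ_castSucc, Fin.sum_univ_castSucc]
  simp only [Fin.val_castSucc, Fin.val_last, (Fin.is_lt _).ne, IsEmpty.forall_iff, and_true,
    forall_const, Nat.sub_self, card_isDyckN_zero_and (P := fun s => Even (termDesc s)) (by simp),
    mul_one]
  have := Nat.card_and_add_card_and_not (IsDyckN n) (fun p => Even (termDesc p))
  omega

lemma card_hillFree_succ_add (n : ℕ) :
    Nat.card {p // IsDyckN (n + 1) p ∧ HillFree p} + Nat.card {p // IsDyckN n p ∧ HillFree p} =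
      ∑ k : Fin (n + 1), Nat.card {t // IsDyckN k t} *
        Nat.card {s // IsDyckN (n - k) s ∧ HillFree s} := by
  rw [card_isDyckN_succ_and n _ (fun k _ => k ≠ 0) (fun _ s => HillFree s)
    fun k _ t s ht _ => by rw [hillFree_arch_iff ht.1, Ne, ht.eq_nil_iff]]
  rw [Fin.sum_univ_succ, Fin.sum_univ_succ]
  simp only [Fin.val_zero, Fin.val_succ, ne_eq, not_true_eq_false, and_false, Nat.card_of_isEmpty,
    zero_mul, Nat.add_eq_zero_iff, one_ne_zero, not_false_eq_true, and_true, Nat.sub_zero]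
  rw [card_isDyckN_zero]
  omega

/-- For every `n ≥ 0`, Dyck `n`-paths with even-length terminal descent are equinumerous
with hill-free Dyck `n`-paths. -/
theorem stmt2 (n : ℕ) :
    Nat.card {p : List Step // IsDyckN n p ∧ Even (termDesc p)} =
    Nat.card {p : List Step // IsDyckN n p ∧ HillFree p} := by
  induction n using Nat.strong_induction_on with
  | _ n ih =>
    cases n with
    | zero => rw [card_isDyckN_zero_and (by simp), card_isDyckN_zero_and hillFree_nil]
    | succ n =>
      have hsum : ∑ k : Fin (n + 1), Nat.card {t // IsDyckN k t} *
            Nat.card {s // IsDyckN (n - k) s ∧ Even (termDesc s)} =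
          ∑ k : Fin (n + 1), Nat.card {t // IsDyckN k t} *
            Nat.card {s // IsDyckN (n - k) s ∧ HillFree s} :=
        Fintype.sum_congr _ _ fun k => by rw [ih (n - k) (by omega)]
      have := card_even_termDesc_succ_add n
      have := card_hillFree_succ_add n
      have := ih n n.lt_succ_self
      omega
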